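/- arXiv:math/9803159 — 9 statements merged into one kernel-verified Lean document; each statement's English description precedes it below -/
import Mathlib

section
/- Let λ₋₁ = 0, λ₀ = λ, and λₙ = αλₙ₋₁ + (1−α)λₙ₋₂ + γ for n ≥ 1, where α ≠ 2 (the case α + β = 1, α² + 4β ≠ 0). If λ_ℓ = λ_k and λ_{ℓ−1} = λ_{k−1} for some ℓ > k ≥ 0, then γ = 0 and λₙ = (λ/(2−α))(1 − (α−1)^{n+1}) for all n ≥ 0, and moreover either λ = 0, or α = 1, or (α−1)^{ℓ−k} = 1. -/
/-- Theorem 2.13, case (b): for the recurrence λₙ = αλₙ₋₁ + (1−α)λₙ₋₂ + γ with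
λ₋₁ = 0, λ₀ = λ and α ≠ 2, if λ_ℓ = λ_k and λ_{ℓ−1} = λ_{k−1} for some ℓ > k ≥ 0,
then γ = 0 and λₙ = (λ/(2−α))(1 − (α−1)^{n+1}) for all n ≥ 0, and moreover
λ = 0, or α = 1, or (α−1)^{ℓ−k} = 1. -/
theorem downUp_weights_repeat_case_b (α γ lam : ℂ) (hα : α ≠ 2) (L : ℤ → ℂ)
    (hm1 : L (-1) = 0) (hL0 : L 0 = lam)
    (hrec : ∀ n : ℤ, 1 ≤ n → L n = α * L (n - 1) + (1 - α) * L (n - 2) + γ)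
    (k l : ℤ) (hk : 0 ≤ k) (hkl : k < l)
    (heq : L l = L k) (heq' : L (l - 1) = L (k - 1)) :
    γ = 0 ∧
    (∀ n : ℤ, 0 ≤ n → L n = lam / (2 - α) * (1 - (α - 1) ^ (n + 1).toNat)) ∧
    (lam = 0 ∨ α = 1 ∨ (α - 1) ^ (l - k).toNat = 1) := by
  have hα2 : α - 2 ≠ 0 := sub_ne_zero.mpr hα
  -- closed form with denominators cleared
  have hP : ∀ m : ℕ, (α - 2) ^ 2 * L ((m : ℤ) - 1)
      = (lam * (α - 2) + γ) * ((α - 1) ^ m - 1) - γ * (α - 2) * m := by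
    intro m
    induction m using Nat.twoStepInduction with
    | zero => simp [hm1]
    | one => norm_num [hL0]; ring
    | more m ih1 ih2 =>
      have h := hrec ((m : ℤ) + 1) (by omega)
      push_cast at ih1 ih2 h ⊢
      have e1 : ((m : ℤ) + 1) - 1 = (m : ℤ) := by ring
      have e2 : ((m : ℤ) + 1) - 2 = (m : ℤ) - 1 := by ring
      have e3 : ((m : ℤ) + 2) - 1 = (m : ℤ) + 1 := by ring
      rw [e1, e2] at h
      rw [e1] at ih2
      rw [e3]
      linear_combination (α) * ih2 - (α - 1) * ih1 + (α - 2) ^ 2 * h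
  -- specialize at k, l, k-1, l-1
  have hl0 : 0 ≤ l := le_of_lt (lt_of_le_of_lt hk hkl)
  set K : ℕ := k.toNat with hKdef
  set M : ℕ := l.toNat with hMdef
  have hK : (K : ℤ) = k := Int.toNat_of_nonneg hk
  have hM : (M : ℤ) = l := Int.toNat_of_nonneg hl0
  have hKM : K < M := by omega
  have hKMC : (M : ℂ) - (K : ℂ) ≠ 0 := by
    have h1 : (K : ℂ) ≠ (M : ℂ) := by exact_mod_cast Nat.ne_of_lt hKM
    intro h; exact h1 (by linear_combination -h)
  have pM1 := hP (M + 1)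
  have pK1 := hP (K + 1)
  have pM := hP M
  have pK := hP K
  push_cast at pM1 pK1 pM pK
  rw [show ((M : ℤ) + 1) - 1 = l from by rw [hM]; ring] at pM1
  rw [show ((K : ℤ) + 1) - 1 = k from by rw [hK]; ring] at pK1
  rw [show (M : ℤ) - 1 = l - 1 from by rw [hM]] at pM
  rw [show (K : ℤ) - 1 = k - 1 from by rw [hK]] at pK
  -- two difference equations
  have E1 : (lam * (α - 2) + γ) * ((α - 1) ^ (M + 1) - (α - 1) ^ (K + 1))
      - γ * (α - 2) * ((M : ℂ) - K) = 0 := by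
    linear_combination pK1 - pM1 + (α - 2) ^ 2 * heq
  have E2 : (lam * (α - 2) + γ) * ((α - 1) ^ M - (α - 1) ^ K)
      - γ * (α - 2) * ((M : ℂ) - K) = 0 := by
    linear_combination pK - pM + (α - 2) ^ 2 * heq'
  have E3 : (lam * (α - 2) + γ) * ((α - 1) ^ M - (α - 1) ^ K) = 0 := by
    have h4 : (α - 2) * ((lam * (α - 2) + γ) * ((α - 1) ^ M - (α - 1) ^ K)) = 0 := by
      linear_combination E1 - E2
    rcases mul_eq_zero.mp h4 with h | h
    · exact absurd h hα2
    · exact h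
  -- γ = 0 in both cases
  have hγ : γ = 0 := by
    have h5 : γ * ((α - 2) * ((M : ℂ) - K)) = 0 := by linear_combination -E2 + E3
    rcases mul_eq_zero.mp h5 with h | h
    · exact h
    · rcases mul_eq_zero.mp h with h3 | h3
      · exact absurd h3 hα2
      · exact absurd h3 hKMC
  subst hγ
  refine ⟨rfl, ?_, ?_⟩
  · -- the closed form
    intro n hn
    have h := hP (n.toNat + 1)
    push_cast at h
    rw [show ((n.toNat : ℤ) + 1) - 1 = n from by rw [Int.toNat_of_nonneg hn]; ring] at h
    have hexp : (n + 1).toNat = n.toNat + 1 := by omega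
    rw [hexp]
    have h2α : (2 : ℂ) - α ≠ 0 := by
      intro hc; exact hα2 (by linear_combination -hc)
    have hne : (α - 2) ^ 2 ≠ 0 := pow_ne_zero 2 hα2
    apply mul_left_cancel₀ hne
    rw [h]
    field_simp
    ring
  · -- the disjunction
    rcases mul_eq_zero.mp E3 with hA0 | hMK
    · left
      have h6 : lam * (α - 2) = 0 := by linear_combination hA0
      rcases mul_eq_zero.mp h6 with h | h
      · exact h
      · exact absurd h hα2
    · by_cases hα1 : α = 1
      · right; left; exact hα1
      · right; right
        have hr0 : α - 1 ≠ 0 := sub_ne_zero.mpr hα1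
        have hMKeq : (α - 1) ^ M = (α - 1) ^ K := by linear_combination hMK
        have hlk : (l - k).toNat = M - K := by omega
        rw [hlk]
        have hMsplit : M = K + (M - K) := by omega
        rw [hMsplit, pow_add] at hMKeq
        have hKne : (α - 1) ^ K ≠ 0 := pow_ne_zero K hr0
        exact mul_left_cancel₀ hKne
          (by linear_combination hMKeq : (α - 1) ^ K * (α - 1) ^ (M - K) = (α - 1) ^ K * 1)
end

section
/- In the down-up algebra A(α,β,γ), the elements du and ud commute: (du)(ud) = (ud)(du). -/
open FreeAlgebra

/-- The defining relations of the down-up algebra A(α,β,γ): with d = ι true,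
u = ι false, we impose d²u = α·dud + β·ud² + γ·d and du² = α·udu + β·u²d + γ·u. -/
inductive DownUpRel (α β γ : ℂ) : FreeAlgebra ℂ Bool → FreeAlgebra ℂ Bool → Prop
  | rel1 : DownUpRel α β γ (ι ℂ true * ι ℂ true * ι ℂ false)
      (α • (ι ℂ true * ι ℂ false * ι ℂ true) + β • (ι ℂ false * ι ℂ true * ι ℂ true)
        + γ • ι ℂ true)
  | rel2 : DownUpRel α β γ (ι ℂ true * ι ℂ false * ι ℂ false)
      (α • (ι ℂ false * ι ℂ true * ι ℂ false) + β • (ι ℂ false * ι ℂ false * ι ℂ true)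
        + γ • ι ℂ false)

/-- The down-up algebra A(α,β,γ). -/
abbrev DownUp (α β γ : ℂ) := RingQuot (DownUpRel α β γ)

/-- The generator d of the down-up algebra. -/
noncomputable def DownUp.d (α β γ : ℂ) : DownUp α β γ :=
  RingQuot.mkAlgHom ℂ (DownUpRel α β γ) (ι ℂ true)

/-- The generator u of the down-up algebra. -/
noncomputable def DownUp.u (α β γ : ℂ) : DownUp α β γ :=
  RingQuot.mkAlgHom ℂ (DownUpRel α β γ) (ι ℂ false)

/-- Equation (2.11): in the down-up algebra A(α,β,γ), du and ud commute. -/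
theorem downUp_du_ud_comm (α β γ : ℂ) :
    (DownUp.d α β γ * DownUp.u α β γ) * (DownUp.u α β γ * DownUp.d α β γ)
      = (DownUp.u α β γ * DownUp.d α β γ) * (DownUp.d α β γ * DownUp.u α β γ) := by
  have h1 := RingQuot.mkAlgHom_rel ℂ (DownUpRel.rel1 (α := α) (β := β) (γ := γ))
  have h2 := RingQuot.mkAlgHom_rel ℂ (DownUpRel.rel2 (α := α) (β := β) (γ := γ))
  simp only [map_add, map_mul, map_smul] at h1 h2
  unfold DownUp.d DownUp.u
  set d := RingQuot.mkAlgHom ℂ (DownUpRel α β γ) (ι ℂ true) with hd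
  set u := RingQuot.mkAlgHom ℂ (DownUpRel α β γ) (ι ℂ false) with hu
  have left : d * u * (u * d) = α • (u * d * u * d) + β • (u * u * d * d) + γ • (u * d) := by
    calc d * u * (u * d) = (d * u * u) * d := by noncomm_ring
      _ = (α • (u * d * u) + β • (u * u * d) + γ • u) * d := by rw [h2]
      _ = α • (u * d * u * d) + β • (u * u * d * d) + γ • (u * d) := by
          simp [add_mul, smul_mul_assoc]
  have right : u * d * (d * u) = α • (u * d * u * d) + β • (u * u * d * d) + γ • (u * d) := by
    calc u * d * (d * u) = u * (d * d * u) := by noncomm_ring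
      _ = u * (α • (d * u * d) + β • (u * d * d) + γ • d) := by rw [h1]
      _ = α • (u * d * u * d) + β • (u * u * d * d) + γ • (u * d) := by
          simp [mul_add, mul_smul_comm, mul_assoc]
  rw [left, right]
end

section
/- Let λ₋₁ = 0, λ₀ = λ ∈ ℂ, and λₙ = αλₙ₋₁ + βλₙ₋₂ + γ for n ≥ 1. Let V(λ) be the ℂ-vector space with basis {vₙ : n ≥ 0}. Define d·vₙ = λₙ₋₁vₙ₋₁ for n ≥ 1, d·v₀ = 0, and u·vₙ = vₙ₊₁. Then this action satisfies the down-up relations: (d²u − α·dud − β·ud² − γ·d)·vₙ = 0 and (du² − α·udu − β·u²d − γ·u)·vₙ = 0 for all n ≥ 0, hence V(λ) is a module for A(α,β,γ). -/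
/-- Proposition 2.2: the Verma module action d·vₙ = λₙ₋₁vₙ₋₁ (d·v₀ = 0),
u·vₙ = vₙ₊₁ on V(λ) = ⊕ₙ ℂvₙ satisfies the down-up relations, hence V(λ) is an
A(α,β,γ)-module. -/
theorem downUp_verma_module (α β γ lam : ℂ) (L : ℕ → ℂ)
    (hL0 : L 0 = lam) (hL1 : L 1 = α * lam + γ)
    (hrec : ∀ n : ℕ, L (n + 2) = α * L (n + 1) + β * L n + γ)
    (D U : (ℕ →₀ ℂ) →ₗ[ℂ] (ℕ →₀ ℂ))
    (hD0 : D (Finsupp.single 0 1) = 0)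
    (hD : ∀ n : ℕ, D (Finsupp.single (n + 1) 1) = L n • Finsupp.single n 1)
    (hU : ∀ n : ℕ, U (Finsupp.single n 1) = Finsupp.single (n + 1) 1) :
    (∀ n : ℕ, (D ∘ₗ D ∘ₗ U) (Finsupp.single n 1)
        = (α • (D ∘ₗ U ∘ₗ D) + β • (U ∘ₗ D ∘ₗ D) + γ • D) (Finsupp.single n 1)) ∧
    (∀ n : ℕ, (D ∘ₗ U ∘ₗ U) (Finsupp.single n 1)
        = (α • (U ∘ₗ D ∘ₗ U) + β • (U ∘ₗ U ∘ₗ D) + γ • U) (Finsupp.single n 1)) := by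
  constructor
  · intro n
    match n with
    | 0 =>
      simp only [LinearMap.comp_apply, LinearMap.add_apply, LinearMap.smul_apply,
        hU, hD, hD0, map_smul, map_zero, smul_zero]
      simp [hD0]
    | 1 =>
      simp only [LinearMap.comp_apply, LinearMap.add_apply, LinearMap.smul_apply,
        hU 1, hD, hD0, map_smul, map_zero, smul_zero, hU 0]
      rw [hL1, hL0]
      module
    | (m + 2) =>
      simp only [LinearMap.comp_apply, LinearMap.add_apply, LinearMap.smul_apply,
        hU, hD, map_smul, hU]
      rw [hrec m]
      module
  · intro n
    match n with
    | 0 =>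
      simp only [LinearMap.comp_apply, LinearMap.add_apply, LinearMap.smul_apply,
        hU, hD, hD0, map_smul, map_zero, smul_zero]
      rw [hL1, hL0]
      module
    | (m + 1) =>
      simp only [LinearMap.comp_apply, LinearMap.add_apply, LinearMap.smul_apply,
        hU, hD, map_smul, hU]
      rw [hrec m]
      module
end

section
/- The Verma module V(λ) for the down-up algebra A(α,β,γ) is a simple module if and only if λₙ ≠ 0 for all n ≥ 0. -/
/-- Proposition 2.4(a): the Verma module V(λ) for A(α,β,γ) is simple (i.e. its only
subspaces invariant under d and u are (0) and V(λ)) if and only if λₙ ≠ 0 for all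
n ≥ 0. -/
theorem downUp_verma_simple_iff (α β γ lam : ℂ) (L : ℕ → ℂ)
    (hL0 : L 0 = lam) (hL1 : L 1 = α * lam + γ)
    (hrec : ∀ n : ℕ, L (n + 2) = α * L (n + 1) + β * L n + γ)
    (D U : (ℕ →₀ ℂ) →ₗ[ℂ] (ℕ →₀ ℂ))
    (hD0 : D (Finsupp.single 0 1) = 0)
    (hD : ∀ n : ℕ, D (Finsupp.single (n + 1) 1) = L n • Finsupp.single n 1)
    (hU : ∀ n : ℕ, U (Finsupp.single n 1) = Finsupp.single (n + 1) 1) :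
    (∀ W : Submodule ℂ (ℕ →₀ ℂ), (∀ w ∈ W, D w ∈ W) → (∀ w ∈ W, U w ∈ W) →
        W = ⊥ ∨ W = ⊤) ↔
      (∀ n : ℕ, L n ≠ 0) := by
  -- evaluation lemma for D
  have hsm : ∀ (m : ℕ) (c : ℂ), Finsupp.single m c = c • Finsupp.single m (1:ℂ) := by
    intro m c; rw [Finsupp.smul_single, smul_eq_mul, mul_one]
  have hDeval : ∀ (w : ℕ →₀ ℂ) (k : ℕ), D w k = L k * w (k + 1) := by
    intro w k
    conv_lhs => rw [← Finsupp.sum_single w, map_finsuppSum, Finsupp.sum_apply,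
      Finsupp.sum]
    have hterm : ∀ m ∈ w.support, (D (Finsupp.single m (w m))) k
        = if m = k + 1 then L k * w (k + 1) else 0 := by
      intro m _
      rw [hsm m, map_smul]
      cases m with
      | zero => simp [hD0]
      | succ j =>
        rw [hD j]
        by_cases hjk : j = k
        · subst hjk; simp [Finsupp.single_apply]; ring
        · simp [Finsupp.single_apply, hjk, fun h => hjk (Nat.succ_injective h)]
    rw [Finset.sum_congr rfl hterm, Finset.sum_ite_eq' w.support (k+1)
      (fun _ => L k * w (k+1))]
    by_cases hmem : k + 1 ∈ w.support
    · simp [hmem]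
    · simp [hmem, Finsupp.notMem_support_iff.mp hmem]
  -- evaluation lemma for U
  have hUeval : ∀ (w : ℕ →₀ ℂ) (k : ℕ),
      U w k = if k = 0 then 0 else w (k - 1) := by
    intro w k
    conv_lhs => rw [← Finsupp.sum_single w, map_finsuppSum, Finsupp.sum_apply,
      Finsupp.sum]
    have hterm : ∀ m ∈ w.support, (U (Finsupp.single m (w m))) k
        = if m = k - 1 ∧ k ≠ 0 then w (k-1) else 0 := by
      intro m _
      rw [hsm m, map_smul, hU m]
      cases k with
      | zero => simp [Finsupp.single_apply]
      | succ j =>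
        by_cases hmj : m = j
        · subst hmj; simp [Finsupp.single_apply]
        · simp [Finsupp.single_apply, hmj, fun h => hmj (Nat.succ_injective h)]
    rw [Finset.sum_congr rfl hterm]
    cases k with
    | zero => simp
    | succ j =>
      simp only [Nat.succ_ne_zero, ne_eq, not_false_iff, and_true,
        Nat.add_sub_cancel, if_neg (Nat.succ_ne_zero j)]
      rw [Finset.sum_ite_eq' w.support j (fun _ => w j)]
      by_cases hmem : j ∈ w.support
      · simp [hmem]
      · simp [hmem, Finsupp.notMem_support_iff.mp hmem]
  constructor
  · -- simple → all L n ≠ 0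
    intro hsimp n hLn
    set S : Set ℕ := {m | n + 1 ≤ m} with hS
    set W := Finsupp.supported ℂ ℂ S with hWdef
    have hDW : ∀ w ∈ W, D w ∈ W := by
      intro f hf
      rw [Finsupp.mem_supported'] at hf ⊢
      intro k hk
      have hkn : k ≤ n := by simp [hS] at hk; omega
      rw [hDeval]
      rcases eq_or_lt_of_le hkn with rfl | h
      · rw [hLn, zero_mul]
      · rw [hf (k+1) (by simp [hS]; omega), mul_zero]
    have hUW : ∀ w ∈ W, U w ∈ W := by
      intro f hf
      rw [Finsupp.mem_supported'] at hf ⊢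
      intro k hk
      have hkn : k ≤ n := by simp [hS] at hk; omega
      rw [hUeval]
      cases k with
      | zero => simp
      | succ j =>
        simp only [Nat.succ_ne_zero, if_neg (Nat.succ_ne_zero j), Nat.add_sub_cancel]
        exact hf j (by simp [hS]; omega)
    rcases hsimp W hDW hUW with hbot | htop
    · have h1 : Finsupp.single (n+1) (1:ℂ) ∈ W :=
        Finsupp.single_mem_supported ℂ 1 (by simp [hS])
      rw [hbot, Submodule.mem_bot] at h1
      exact (one_ne_zero : (1:ℂ) ≠ 0) ((Finsupp.single_eq_zero).mp h1)
    · have h0 : Finsupp.single 0 (1:ℂ) ∈ W := by rw [htop]; trivial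
      rw [Finsupp.mem_supported'] at h0
      have := h0 0 (by simp [hS])
      simp at this
  · -- all L n ≠ 0 → simple
    intro hL W hDW hUW
    by_cases hW : W = ⊥
    · exact Or.inl hW
    right
    obtain ⟨w₀, hw₀W, hw₀⟩ := Submodule.exists_mem_ne_zero_of_ne_bot hW
    -- key: from any nonzero element bounded by N, get single 0 1 ∈ W
    have key : ∀ N : ℕ, ∀ w : ℕ →₀ ℂ, w ∈ W → w ≠ 0 →
        (∀ k, N < k → w k = 0) → Finsupp.single 0 (1:ℂ) ∈ W := by
      intro N
      induction N with
      | zero =>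
        intro w hwW hw0 hsup
        have h0 : w 0 ≠ 0 := by
          intro h
          apply hw0
          ext k
          cases k with
          | zero => simpa using h
          | succ j => simpa using hsup (j+1) (Nat.succ_pos j)
        have heq : Finsupp.single 0 (1:ℂ) = (w 0)⁻¹ • w := by
          ext k
          cases k with
          | zero => simp [inv_mul_cancel₀ h0]
          | succ j => simp [Finsupp.single_apply, hsup (j+1) (Nat.succ_pos j)]
        rw [heq]
        exact W.smul_mem _ hwW
      | succ N ih =>
        intro w hwW hw0 hsup
        by_cases hN : w (N+1) = 0
        · refine ih w hwW hw0 (fun k hk => ?_)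
          rcases eq_or_lt_of_le (Nat.succ_le_of_lt hk) with h | h
          · rw [← h]; exact hN
          · exact hsup k h
        · refine ih (D w) (hDW w hwW) ?_ ?_
          · intro h
            have : D w N = 0 := by rw [h]; rfl
            rw [hDeval] at this
            exact mul_ne_zero (hL N) hN this
          · intro k hk
            rw [hDeval, hsup (k+1) (by omega), mul_zero]
    have hsingle0 : Finsupp.single 0 (1:ℂ) ∈ W := by
      refine key (w₀.support.sup id) w₀ hw₀W hw₀ (fun k hk => ?_)
      by_contra h
      have : k ∈ w₀.support := Finsupp.mem_support_iff.mpr h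
      have := Finset.le_sup (f := id) this
      simp at this
      omega
    have hsingle : ∀ n : ℕ, Finsupp.single n (1:ℂ) ∈ W := by
      intro n
      induction n with
      | zero => exact hsingle0
      | succ m ih =>
        have := hUW _ ih
        rwa [hU m] at this
    rw [eq_top_iff]
    intro f _
    rw [← Finsupp.sum_single f]
    refine Submodule.sum_mem W (fun m _ => ?_)
    rw [hsm m]
    exact W.smul_mem _ (hsingle m)
end

section
/- If m is minimal with λₘ = 0, then M(λ) = span{vⱼ : j ≥ m+1} is a maximal submodule of the Verma module V(λ), and every submodule N of V(λ) contained in span{vⱼ : j ≥ 1} satisfies N ⊆ M(λ). -/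
/-!
The lowering operator reads off coefficients: `(dᵏ f)ₙ = λₙ ⋯ λₙ₊ₖ₋₁ · fₙ₊ₖ`. As
`λ₀, …, λₘ₋₁ ≠ 0 = λₘ`, the vector `dᵐ f` is `λ₀ ⋯ λₘ₋₁ fₘ · v₀` modulo `M(λ)`, and a `u`-stable
submodule containing `v₀` is everything. A submodule strictly above `M(λ)` contains some `f` with
`fⱼ ≠ 0` for a `j ≤ m`, and `u^(m-j)` moves that coefficient to index `m`; so `M(λ)` is maximal.
Dually, if `f ∈ N` has `fᵢ ≠ 0` with `i ≤ m`, then `dⁱ f ∈ N` has a nonzero `v₀`-coefficient.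
-/

open Finsupp

namespace DownUpVerma

theorem span_setOf_single_eq_supported {R ι : Type*} [Semiring R] (p : ι → Prop) :
    Submodule.span R {f : ι →₀ R | ∃ j, p j ∧ f = single j 1} = supported R R {j | p j} := by
  rw [supported_eq_span_single]
  congr 1
  ext f
  simp [eq_comm]

theorem mem_supported_succ_le_iff {R : Type*} [Semiring R] {m : ℕ} {f : ℕ →₀ R} :
    f ∈ supported R R {j | m + 1 ≤ j} ↔ ∀ i ≤ m, f i = 0 := by
  simp only [mem_supported', Set.mem_ofPred_eq, not_le, Nat.lt_succ_iff]

section CommSemiring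

variable {R : Type*} [CommSemiring R]

theorem lowering_apply {L : ℕ → R} {D : (ℕ →₀ R) →ₗ[R] (ℕ →₀ R)}
    (hD0 : D (single 0 1) = 0) (hD : ∀ n, D (single (n + 1) 1) = L n • single n 1)
    (f : ℕ →₀ R) (n : ℕ) : D f n = L n * f (n + 1) := by
  suffices h : (lapply n).comp D = L n • lapply (n + 1) from LinearMap.congr_fun h f
  ext (_ | a)
  · simp [hD0]
  · by_cases h : a = n <;> simp [hD, h]

theorem lowering_pow_apply {L : ℕ → R} {D : (ℕ →₀ R) →ₗ[R] (ℕ →₀ R)}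
    (hD : ∀ f n, D f n = L n * f (n + 1)) (k : ℕ) (f : ℕ →₀ R) (n : ℕ) :
    (D ^ k) f n = (∏ t ∈ Finset.range k, L (n + t)) * f (n + k) := by
  induction k generalizing f with
  | zero => simp
  | succ k ih =>
    rw [pow_succ, Module.End.mul_apply, ih, hD, Finset.prod_range_succ, ← add_assoc]
    ring

theorem raising_apply_zero {U : (ℕ →₀ R) →ₗ[R] (ℕ →₀ R)}
    (hU : ∀ n, U (single n 1) = single (n + 1) 1) (f : ℕ →₀ R) : U f 0 = 0 := by
  suffices h : (lapply 0).comp U = 0 from LinearMap.congr_fun h f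
  ext a
  simp [hU]

theorem raising_apply_succ {U : (ℕ →₀ R) →ₗ[R] (ℕ →₀ R)}
    (hU : ∀ n, U (single n 1) = single (n + 1) 1) (f : ℕ →₀ R) (n : ℕ) :
    U f (n + 1) = f n := by
  suffices h : (lapply (n + 1)).comp U = lapply n from LinearMap.congr_fun h f
  ext a
  by_cases h : a = n <;> simp [hU, h]

theorem raising_pow_apply_add {U : (ℕ →₀ R) →ₗ[R] (ℕ →₀ R)}
    (hU : ∀ n, U (single n 1) = single (n + 1) 1) (k : ℕ) (f : ℕ →₀ R) (n : ℕ) :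
    (U ^ k) f (n + k) = f n := by
  induction k generalizing n with
  | zero => simp
  | succ k ih => rw [pow_succ', Module.End.mul_apply, ← add_assoc, raising_apply_succ hU, ih]

theorem lowering_mem_supported_succ_le {L : ℕ → R} {D : (ℕ →₀ R) →ₗ[R] (ℕ →₀ R)}
    (hD : ∀ f n, D f n = L n * f (n + 1)) {m : ℕ} (hm : L m = 0) {w : ℕ →₀ R}
    (hw : w ∈ supported R R {j | m + 1 ≤ j}) : D w ∈ supported R R {j | m + 1 ≤ j} := by
  rw [mem_supported_succ_le_iff] at hw ⊢
  intro i hi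
  rcases hi.lt_or_eq with hi | rfl
  · rw [hD, hw (i + 1) hi, mul_zero]
  · rw [hD, hm, zero_mul]

theorem raising_mem_supported_succ_le {U : (ℕ →₀ R) →ₗ[R] (ℕ →₀ R)}
    (hU : ∀ n, U (single n 1) = single (n + 1) 1) (m : ℕ) {w : ℕ →₀ R}
    (hw : w ∈ supported R R {j | m + 1 ≤ j}) : U w ∈ supported R R {j | m + 1 ≤ j} := by
  rw [mem_supported_succ_le_iff] at hw ⊢
  rintro (_ | i) hi
  · exact raising_apply_zero hU w
  · rw [raising_apply_succ hU]
    exact hw i (by omega)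

theorem lowering_pow_apply_eq_zero {L : ℕ → R} {D : (ℕ →₀ R) →ₗ[R] (ℕ →₀ R)}
    (hD : ∀ f n, D f n = L n * f (n + 1)) {m : ℕ} (hm : L m = 0) (f : ℕ →₀ R) {n : ℕ}
    (hn0 : n ≠ 0) (hnm : n ≤ m) : (D ^ m) f n = 0 := by
  rw [lowering_pow_apply hD, Finset.prod_eq_zero (i := m - n) (by simp; omega)
    (by rwa [Nat.add_sub_cancel' hnm]), zero_mul]

theorem eq_top_of_single_zero_mem {U : (ℕ →₀ R) →ₗ[R] (ℕ →₀ R)}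
    (hU : ∀ n, U (single n 1) = single (n + 1) 1) {W : Submodule R (ℕ →₀ R)}
    (hWU : ∀ w ∈ W, U w ∈ W) (h0 : single 0 1 ∈ W) : W = ⊤ := by
  have hsingle : ∀ n, single n (1 : R) ∈ W := by
    intro n
    induction n with
    | zero => exact h0
    | succ n ih => exact hU n ▸ hWU _ ih
  rw [eq_top_iff, ← supported_univ, supported_eq_span_single, Submodule.span_le]
  rintro _ ⟨n, -, rfl⟩
  exact hsingle n

end CommSemiring

section Field

variable {K : Type*} [Field K] {L : ℕ → K} {D U : (ℕ →₀ K) →ₗ[K] (ℕ →₀ K)} {m : ℕ}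

theorem lowering_pow_apply_zero_ne_zero (hD : ∀ f n, D f n = L n * f (n + 1))
    (hmin : ∀ k < m, L k ≠ 0) {i : ℕ} (hi : i ≤ m) {f : ℕ →₀ K} (hf : f i ≠ 0) :
    (D ^ i) f 0 ≠ 0 := by
  rw [lowering_pow_apply hD, zero_add]
  exact mul_ne_zero (Finset.prod_ne_zero_iff.2 fun t ht => by
    simp only [zero_add]; exact hmin t (by simp at ht; omega)) hf

theorem eq_top_of_supported_succ_le_lt (hD : ∀ f n, D f n = L n * f (n + 1))
    (hU : ∀ n, U (single n 1) = single (n + 1) 1) (hm : L m = 0) (hmin : ∀ k < m, L k ≠ 0)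
    {W : Submodule K (ℕ →₀ K)} (hWD : ∀ w ∈ W, D w ∈ W) (hWU : ∀ w ∈ W, U w ∈ W)
    (hlt : supported K K {j | m + 1 ≤ j} < W) : W = ⊤ := by
  obtain ⟨w, hwW, hwM⟩ := SetLike.exists_of_lt hlt
  obtain ⟨j, hjm, hwj⟩ : ∃ j ≤ m, w j ≠ 0 := by
    simpa using mt mem_supported_succ_le_iff.2 hwM
  set y := (D ^ m) ((U ^ (m - j)) w)
  have hyW : y ∈ W := Module.End.pow_apply_mem_of_forall_mem m hWD _
    (Module.End.pow_apply_mem_of_forall_mem _ hWU w hwW)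
  have hshift : (U ^ (m - j)) w m = w j := by
    simpa only [Nat.add_sub_cancel' hjm] using raising_pow_apply_add hU (m - j) w j
  have hy0 : y 0 ≠ 0 := lowering_pow_apply_zero_ne_zero hD hmin le_rfl (hshift ▸ hwj)
  have hyM : y - y 0 • single 0 1 ∈ supported K K {j | m + 1 ≤ j} := by
    rw [mem_supported_succ_le_iff]
    rintro (_ | n) hn
    · simp
    · simpa using lowering_pow_apply_eq_zero hD hm _ n.succ_ne_zero hn
  have : y 0 • single 0 1 ∈ W := by simpa using W.sub_mem hyW (hlt.le hyM)
  exact eq_top_of_single_zero_mem hU hWU ((W.smul_mem_iff hy0).1 this)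

theorem le_supported_succ_le_of_le_supported_one_le (hD : ∀ f n, D f n = L n * f (n + 1))
    (hmin : ∀ k < m, L k ≠ 0) {N : Submodule K (ℕ →₀ K)} (hND : ∀ w ∈ N, D w ∈ N)
    (hN : N ≤ supported K K {j | 1 ≤ j}) : N ≤ supported K K {j | m + 1 ≤ j} := by
  intro w hw
  rw [mem_supported_succ_le_iff]
  by_contra! ⟨i, him, hi⟩
  have := hN (Module.End.pow_apply_mem_of_forall_mem i hND w hw)
  exact lowering_pow_apply_zero_ne_zero hD hmin him hi (mem_supported_succ_le_iff.1 this 0 le_rfl)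

end Field

end DownUpVerma

open DownUpVerma

theorem downUp_verma_maximal_submodule_general (L : ℕ → ℂ)
    (D U : (ℕ →₀ ℂ) →ₗ[ℂ] (ℕ →₀ ℂ))
    (hD0 : D (Finsupp.single 0 1) = 0)
    (hD : ∀ n : ℕ, D (Finsupp.single (n + 1) 1) = L n • Finsupp.single n 1)
    (hU : ∀ n : ℕ, U (Finsupp.single n 1) = Finsupp.single (n + 1) 1)
    (m : ℕ) (hm : L m = 0) (hmin : ∀ k < m, L k ≠ 0)
    (M : Submodule ℂ (ℕ →₀ ℂ))
    (hM : M = Submodule.span ℂ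
      {f : ℕ →₀ ℂ | ∃ j : ℕ, m + 1 ≤ j ∧ f = Finsupp.single j 1}) :
    (∀ w ∈ M, D w ∈ M) ∧ (∀ w ∈ M, U w ∈ M) ∧ M ≠ ⊤ ∧
    (∀ W : Submodule ℂ (ℕ →₀ ℂ), (∀ w ∈ W, D w ∈ W) → (∀ w ∈ W, U w ∈ W) →
      M < W → W = ⊤) ∧
    (∀ N : Submodule ℂ (ℕ →₀ ℂ), (∀ w ∈ N, D w ∈ N) → (∀ w ∈ N, U w ∈ N) →
      N ≤ Submodule.span ℂ {f : ℕ →₀ ℂ | ∃ j : ℕ, 1 ≤ j ∧ f = Finsupp.single j 1} →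
      N ≤ M) := by
  have hDf := lowering_apply hD0 hD
  simp only [span_setOf_single_eq_supported] at hM ⊢
  subst hM
  refine ⟨fun _ => lowering_mem_supported_succ_le hDf hm,
    fun _ => raising_mem_supported_succ_le hU m, fun htop => ?_,
    fun _ => eq_top_of_supported_succ_le_lt hDf hU hm hmin,
    fun _ hND _ => le_supported_succ_le_of_le_supported_one_le hDf hmin hND⟩
  simpa using mem_supported_succ_le_iff.1 (Submodule.eq_top_iff'.1 htop (single 0 1)) 0 m.zero_le

/-- Proposition 2.4(b),(c): if m is minimal with λₘ = 0, then
M(λ) = span{vⱼ : j ≥ m+1} is a maximal submodule of the Verma module V(λ),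
and every submodule contained in span{vⱼ : j ≥ 1} is contained in M(λ). -/
theorem downUp_verma_maximal_submodule (α β γ lam : ℂ) (L : ℕ → ℂ)
    (hL0 : L 0 = lam) (hL1 : L 1 = α * lam + γ)
    (hrec : ∀ n : ℕ, L (n + 2) = α * L (n + 1) + β * L n + γ)
    (D U : (ℕ →₀ ℂ) →ₗ[ℂ] (ℕ →₀ ℂ))
    (hD0 : D (Finsupp.single 0 1) = 0)
    (hD : ∀ n : ℕ, D (Finsupp.single (n + 1) 1) = L n • Finsupp.single n 1)
    (hU : ∀ n : ℕ, U (Finsupp.single n 1) = Finsupp.single (n + 1) 1)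
    (m : ℕ) (hm : L m = 0) (hmin : ∀ k < m, L k ≠ 0)
    (M : Submodule ℂ (ℕ →₀ ℂ))
    (hM : M = Submodule.span ℂ
      {f : ℕ →₀ ℂ | ∃ j : ℕ, m + 1 ≤ j ∧ f = Finsupp.single j 1}) :
    (∀ w ∈ M, D w ∈ M) ∧ (∀ w ∈ M, U w ∈ M) ∧ M ≠ ⊤ ∧
    (∀ W : Submodule ℂ (ℕ →₀ ℂ), (∀ w ∈ W, D w ∈ W) → (∀ w ∈ W, U w ∈ W) →
      M < W → W = ⊤) ∧
    (∀ N : Submodule ℂ (ℕ →₀ ℂ), (∀ w ∈ N, D w ∈ N) → (∀ w ∈ N, U w ∈ N) →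
      N ≤ Submodule.span ℂ {f : ℕ →₀ ℂ | ∃ j : ℕ, 1 ≤ j ∧ f = Finsupp.single j 1} →
      N ≤ M) :=
  downUp_verma_maximal_submodule_general L D U hD0 hD hU m hm hmin M hM
end

section
/- In the down-up algebra A(α,β,γ), suppose V is a module generated by a vector y₀ with d·y₀ = 0 and du·y₀ = λy₀, and let yₙ = uⁿ·y₀. Then du·yₙ = λₙyₙ and d·yₙ = λₙ₋₁yₙ₋₁ for all n ≥ 1, where λ₀ = λ and λₙ = αλₙ₋₁ + βλₙ₋₂ + γ (with λ₋₁ = 0). -/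
/-- Equations (2.9), (2.10): in any A(α,β,γ)-module V generated by a highest weight
vector y₀ (d·y₀ = 0, du·y₀ = λy₀), the vectors yₙ = uⁿ·y₀ satisfy du·yₙ = λₙyₙ
and d·yₙ = λₙ₋₁yₙ₋₁. -/
theorem downUp_highest_weight_vectors (α β γ lam : ℂ) (L : ℕ → ℂ)
    (hL0 : L 0 = lam) (hL1 : L 1 = α * lam + γ)
    (hrec : ∀ n : ℕ, L (n + 2) = α * L (n + 1) + β * L n + γ)
    (V : Type*) [AddCommGroup V] [Module ℂ V]
    (D U : V →ₗ[ℂ] V)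
    (hrel1 : D ∘ₗ D ∘ₗ U = α • (D ∘ₗ U ∘ₗ D) + β • (U ∘ₗ D ∘ₗ D) + γ • D)
    (hrel2 : D ∘ₗ U ∘ₗ U = α • (U ∘ₗ D ∘ₗ U) + β • (U ∘ₗ U ∘ₗ D) + γ • U)
    (y₀ : V) (hy0 : D y₀ = 0) (hy1 : D (U y₀) = lam • y₀) :
    (∀ n : ℕ, D (U ((U ^ n) y₀)) = L n • (U ^ n) y₀) ∧
    (∀ n : ℕ, D ((U ^ (n + 1)) y₀) = L n • (U ^ n) y₀) := by
  have key : ∀ n : ℕ, D (U ((U ^ n) y₀)) = L n • (U ^ n) y₀ ∧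
      D (U ((U ^ (n + 1)) y₀)) = L (n + 1) • (U ^ (n + 1)) y₀ := by
    intro n
    induction n with
    | zero =>
      have h := congrArg (fun f => f y₀) hrel2
      simp only [LinearMap.comp_apply, LinearMap.add_apply, LinearMap.smul_apply,
        hy0, hy1, map_zero, map_smul, smul_zero] at h
      constructor
      · simpa [hL0] using hy1
      · rw [pow_succ', pow_zero]
        simp only [Module.End.mul_apply, Module.End.one_apply, h, hL1,
          smul_smul, add_smul]
        ring_nf
        module
    | succ n ih =>
      refine ⟨ih.2, ?_⟩
      have h := congrArg (fun f => f ((U ^ (n + 1)) y₀)) hrel2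
      simp only [LinearMap.comp_apply, LinearMap.add_apply, LinearMap.smul_apply] at h
      have hx : (U ^ (n + 1)) y₀ = U ((U ^ n) y₀) := by
        rw [pow_succ']; rfl
      rw [ih.2] at h
      rw [hx, ih.1] at h
      have hx2 : (U ^ (n + 1 + 1)) y₀ = U ((U ^ (n + 1)) y₀) := by rw [pow_succ']; rfl
      rw [hx2, hx]
      have hr : L (n + 1 + 1) = α * L (n + 1) + β * L n + γ := hrec n
      rw [h, hr]
      simp only [map_smul, smul_smul, add_smul]
  refine ⟨fun n => (key n).1, fun n => ?_⟩
  rw [show (U ^ (n + 1)) y₀ = U ((U ^ n) y₀) from by rw [pow_succ']; rfl]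
  exact (key n).1
end

section
/- The set of monomials {uⁱ(du)ʲdᵏ : i, j, k ≥ 0} is a ℂ-basis of the down-up algebra A(α,β,γ) (Poincaré–Birkhoff–Witt theorem for down-up algebras). -/
open FreeAlgebra

/-!
Read the defining relations as rewriting rules `ddu ↦ α dud + β udd + γ d` and
`duu ↦ α udu + β uud + γ u` on words in `d, u`. Every rule strictly lowers the number of
inversions (pairs `d … u`), and the words containing no `ddu` or `duu` are exactly the
`uⁱ(du)ʲdᵏ`. Rewriting a redex chosen arbitrarily therefore sends each word to a combination
of such reduced words, and since the only overlap of two left-hand sides, `dduu`, resolves,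
the result does not depend on the choices (the diamond lemma). So `w ↦ reduce (b :: w)` gives
operators on the free vector space on words that satisfy the defining relations; in this
representation `uⁱ(du)ʲdᵏ` maps the empty word to the basis vector `uⁱ(du)ʲdᵏ`, which gives
linear independence. Spanning is the same rewriting carried out in the algebra, by induction
on inversions.
-/

namespace DownUp

def inversions : List Bool → ℕ
  | [] => 0
  | true :: t => t.count false + inversions t
  | false :: t => inversions t

theorem inversions_append (a b : List Bool) :
    inversions (a ++ b) = inversions a + inversions b + a.count true * b.count false := by
  induction a with
  | nil => simp [inversions]
  | cons x t ih =>
    cases x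
    · simp [inversions, ih]
    · simp [inversions, ih]; ring

theorem inversions_append_append_lt {m m' : List Bool} (h : inversions m < inversions m')
    (htrue : m.count true ≤ m'.count true) (hfalse : m.count false ≤ m'.count false)
    (x y : List Bool) : inversions (x ++ m ++ y) < inversions (x ++ m' ++ y) := by
  simp only [inversions_append, List.count_append]
  nlinarith [Nat.mul_le_mul_left (x.count true) hfalse, Nat.mul_le_mul_right (y.count false) htrue]

-- `true` is `d` and `false` is `u`; the relation `lhs p = ∑ i, coeff α β γ i • rhs p i` is
-- `DownUpRel.rel1` for `p = true` and `DownUpRel.rel2` for `p = false`.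
def lhs : Bool → List Bool
  | true => [true, true, false]
  | false => [true, false, false]

def rhs : Bool → Fin 3 → List Bool
  | true => ![[true, false, true], [false, true, true], [true]]
  | false => ![[false, true, false], [false, false, true], [false]]

def coeff (α β γ : ℂ) : Fin 3 → ℂ := ![α, β, γ]

theorem inversions_rhs_lt (p : Bool) (i : Fin 3) (x y : List Bool) :
    inversions (x ++ rhs p i ++ y) < inversions (x ++ lhs p ++ y) := by
  apply inversions_append_append_lt <;> cases p <;> fin_cases i <;> decide

def IsReduced (w : List Bool) : Prop := ∀ p, ¬ lhs p <:+: w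

theorem isReduced_nil : IsReduced [] := fun p h => by
  cases p <;> simp [lhs] at h

theorem isReduced_cons_false {w : List Bool} : IsReduced (false :: w) ↔ IsReduced w := by
  simp [IsReduced, List.infix_cons_iff, Bool.forall_bool, lhs]

theorem isReduced_cons_true {w : List Bool} :
    IsReduced (true :: w) ↔ IsReduced w ∧ ¬ [true, false] <+: w ∧ ¬ [false, false] <+: w := by
  simp only [IsReduced, lhs, List.infix_cons_iff, not_or, Bool.forall_bool, List.cons_prefix_cons,
    true_and]
  tauto

def pbwWord (q : ℕ × ℕ × ℕ) : List Bool :=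
  List.replicate q.1 false ++ (List.replicate q.2.1 [true, false]).flatten ++
    List.replicate q.2.2 true

@[simp] theorem pbwWord_succ (i j k : ℕ) : pbwWord (i + 1, j, k) = false :: pbwWord (i, j, k) := by
  simp [pbwWord, List.replicate_succ]

@[simp] theorem pbwWord_zero_succ (j k : ℕ) :
    pbwWord (0, j + 1, k) = true :: false :: pbwWord (0, j, k) := by
  simp [pbwWord, List.replicate_succ]

@[simp] theorem pbwWord_zero_zero (k : ℕ) : pbwWord (0, 0, k) = List.replicate k true := by
  simp [pbwWord]

theorem isReduced_replicate_true (k : ℕ) : IsReduced (List.replicate k true) := fun p h => by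
  have : false ∈ lhs p := by cases p <;> decide
  simpa using h.subset this

theorem pbwWord_zero_ne_false_cons (j k : ℕ) (w : List Bool) : pbwWord (0, j, k) ≠ false :: w := by
  cases j <;> cases k <;> simp [List.replicate_succ]

theorem isReduced_pbwWord : ∀ q : ℕ × ℕ × ℕ, IsReduced (pbwWord q)
  | (i + 1, j, k) => by rw [pbwWord_succ, isReduced_cons_false]; exact isReduced_pbwWord (i, j, k)
  | (0, j + 1, k) => by
    rw [pbwWord_zero_succ, isReduced_cons_true, isReduced_cons_false]
    refine ⟨isReduced_pbwWord (0, j, k), by simp, fun ⟨w, hw⟩ => ?_⟩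
    exact pbwWord_zero_ne_false_cons j k w (List.cons_injective hw.symm)
  | (0, 0, k) => by rw [pbwWord_zero_zero]; exact isReduced_replicate_true k

theorem exists_pbwWord_of_isReduced {w : List Bool} (h : IsReduced w) :
    ∃ q, w = pbwWord q := by
  induction w with
  | nil => exact ⟨(0, 0, 0), rfl⟩
  | cons b t ih =>
    cases b with
    | false =>
      obtain ⟨⟨i, j, k⟩, rfl⟩ := ih (isReduced_cons_false.mp h)
      exact ⟨(i + 1, j, k), by simp⟩
    | true =>
      obtain ⟨ht, hdu, huu⟩ := isReduced_cons_true.mp h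
      obtain ⟨⟨i, j, k⟩, rfl⟩ := ih ht
      rcases i with _ | _ | i
      · rcases j with _ | j
        · exact ⟨(0, 0, k + 1), by simp [List.replicate_succ]⟩
        · simp at hdu
      · exact ⟨(0, j + 1, k), by simp⟩
      · simp at huu

theorem pbwWord_zero_injective {j k j' k' : ℕ} (h : pbwWord (0, j, k) = pbwWord (0, j', k')) :
    j = j' ∧ k = k' := by
  induction j generalizing j' with
  | succ j ih =>
    rcases j' with _ | j'
    · simp [List.eq_replicate_iff] at h
    · simpa using ih (by simpa using h)
  | zero =>
    rcases j' with _ | j'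
    · simpa using h
    · simp [eq_comm (a := List.replicate k true), List.eq_replicate_iff] at h

theorem pbwWord_injective : Function.Injective pbwWord := by
  rintro ⟨i, j, k⟩ ⟨i', j', k'⟩ h
  induction i generalizing i' with
  | succ i ih =>
    rcases i' with _ | i'
    · exact absurd h.symm (pbwWord_zero_ne_false_cons _ _ _)
    · simpa using ih i' (by simpa using h)
  | zero =>
    rcases i' with _ | i'
    · simpa using pbwWord_zero_injective h
    · exact absurd h (pbwWord_zero_ne_false_cons _ _ _)

theorem append_lhs_append_eq_cases {x y x' y' : List Bool} {p p' : Bool}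
    (h : x ++ lhs p ++ y = x' ++ lhs p' ++ y') (hle : x.length ≤ x'.length) :
    (x' = x ∧ p' = p ∧ y' = y) ∨ (∃ z, x' = x ++ lhs p ++ z ∧ y = z ++ lhs p' ++ y') ∨
      (p = true ∧ p' = false ∧ x' = x ++ [true] ∧ y = false :: y') := by
  obtain ⟨z, rfl⟩ : x <+: x' := List.prefix_of_prefix_length_le
    ⟨_, (List.append_assoc _ _ _).symm.trans h⟩ ⟨_, (List.append_assoc _ _ _).symm⟩ hle
  simp only [List.append_assoc, List.append_cancel_left_eq] at h
  rcases z with _ | ⟨a, _ | ⟨b, _ | ⟨c, z⟩⟩⟩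
  · cases p <;> cases p' <;> simp_all [lhs]
  · cases p <;> cases p' <;> simp_all [lhs]
  · cases p <;> cases p' <;> simp_all [lhs]
  · right; left
    refine ⟨z, ?_, ?_⟩ <;> cases p <;> cases p' <;> simp_all [lhs]

theorem exists_eq_append_lhs_append_of_not_isReduced {w : List Bool} (h : ¬ IsReduced w) :
    ∃ s : List Bool × Bool × List Bool, w = s.1 ++ lhs s.2.1 ++ s.2.2 := by
  simp only [IsReduced, not_forall, not_not] at h
  obtain ⟨p, x, y, hw⟩ := h
  exact ⟨(x, p, y), hw.symm⟩

theorem not_isReduced_append_lhs_append (x : List Bool) (p : Bool) (y : List Bool) :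
    ¬ IsReduced (x ++ lhs p ++ y) :=
  fun h => h p ⟨x, y, rfl⟩

variable {α β γ : ℂ}

open Finsupp Submodule

variable (α β γ) in
open Classical in
noncomputable def reduce (w : List Bool) : List Bool →₀ ℂ :=
  if h : IsReduced w then single w 1 else
    let s := (exists_eq_append_lhs_append_of_not_isReduced h).choose
    ∑ i, coeff α β γ i • reduce (s.1 ++ rhs s.2.1 i ++ s.2.2)
termination_by inversions w
decreasing_by
  exact (inversions_rhs_lt _ _ _ _).trans_eq
    (congrArg inversions (exists_eq_append_lhs_append_of_not_isReduced h).choose_spec).symm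

variable (α β γ) in
noncomputable def reduceAt (x : List Bool) (p : Bool) (y : List Bool) : List Bool →₀ ℂ :=
  ∑ i, coeff α β γ i • reduce α β γ (x ++ rhs p i ++ y)

theorem reduce_of_isReduced {w : List Bool} (h : IsReduced w) : reduce α β γ w = single w 1 := by
  rw [reduce, dif_pos h]

theorem exists_reduce_eq_reduceAt {w : List Bool} (h : ¬ IsReduced w) :
    ∃ x p y, w = x ++ lhs p ++ y ∧ reduce α β γ w = reduceAt α β γ x p y := by
  refine ⟨_, _, _, (exists_eq_append_lhs_append_of_not_isReduced h).choose_spec, ?_⟩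
  rw [reduce, dif_neg h, reduceAt]

section Confluence

variable {n : ℕ}

variable (α β γ n) in
def ReduceAgreesBelow : Prop :=
  ∀ x p y, inversions (x ++ lhs p ++ y) < n → reduce α β γ (x ++ lhs p ++ y) = reduceAt α β γ x p y

theorem ReduceAgreesBelow.reduce_eq (ih : ReduceAgreesBelow α β γ n) {w x y : List Bool} {p : Bool}
    (hw : w = x ++ lhs p ++ y) (hlt : inversions w < n) :
    reduce α β γ w = reduceAt α β γ x p y := by
  subst hw; exact ih x p y hlt

theorem reduceAt_disjoint (ih : ReduceAgreesBelow α β γ n) {x z y : List Bool} {p q : Bool}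
    (hn : inversions (x ++ lhs p ++ z ++ lhs q ++ y) ≤ n) :
    reduceAt α β γ x p (z ++ lhs q ++ y) = reduceAt α β γ (x ++ lhs p ++ z) q y := by
  have hleft (i : Fin 3) : reduce α β γ (x ++ rhs p i ++ (z ++ lhs q ++ y)) =
      reduceAt α β γ (x ++ rhs p i ++ z) q y :=
    ih.reduce_eq (by simp) <| (inversions_rhs_lt p i x _).trans_le (by simpa using hn)
  have hright (j : Fin 3) : reduce α β γ (x ++ lhs p ++ z ++ rhs q j ++ y) =
      reduceAt α β γ x p (z ++ rhs q j ++ y) :=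
    ih.reduce_eq (by simp) <| (inversions_rhs_lt q j _ y).trans_le hn
  rw [reduceAt, reduceAt]
  simp only [hleft, hright]
  simp only [reduceAt, Finset.smul_sum, smul_smul, List.append_assoc]
  rw [Finset.sum_comm]
  simp only [mul_comm]

theorem reduceAt_overlap (ih : ReduceAgreesBelow α β γ n) {x y : List Bool}
    (hn : inversions (x ++ lhs true ++ false :: y) ≤ n) :
    reduceAt α β γ x true (false :: y) = reduceAt α β γ (x ++ [true]) false y := by
  have hudd : reduce α β γ (x ++ rhs true 1 ++ false :: y) =
      reduceAt α β γ (x ++ [false]) true y :=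
    ih.reduce_eq (by simp [rhs, lhs]) <| (inversions_rhs_lt true 1 x _).trans_le hn
  have hduu : reduce α β γ (x ++ [true] ++ rhs false 1 ++ y) =
      reduceAt α β γ x false (true :: y) :=
    ih.reduce_eq (by simp [rhs, lhs]) <|
      (inversions_rhs_lt false 1 _ y).trans_le (by simpa [lhs] using hn)
  rw [reduceAt, reduceAt, Fin.sum_univ_three, Fin.sum_univ_three, hudd, hduu]
  simp [reduceAt, Fin.sum_univ_three, rhs]

theorem reduceAt_eq_of_eq (ih : ReduceAgreesBelow α β γ n) {x y x' y' : List Bool} {p p' : Bool}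
    (h : x ++ lhs p ++ y = x' ++ lhs p' ++ y') (hn : inversions (x ++ lhs p ++ y) ≤ n) :
    reduceAt α β γ x p y = reduceAt α β γ x' p' y' := by
  wlog hle : x.length ≤ x'.length generalizing x y x' y' p p'
  · exact (this h.symm (h ▸ hn) (le_of_not_ge hle)).symm
  rcases append_lhs_append_eq_cases h hle with
    ⟨rfl, rfl, rfl⟩ | ⟨z, rfl, rfl⟩ | ⟨rfl, rfl, rfl, rfl⟩
  · rfl
  · exact reduceAt_disjoint ih (by simpa using hn)
  · exact reduceAt_overlap ih hn

end Confluence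

theorem reduce_append_lhs_append (x : List Bool) (p : Bool) (y : List Bool) :
    reduce α β γ (x ++ lhs p ++ y) = reduceAt α β γ x p y := by
  induction hn : inversions (x ++ lhs p ++ y) using Nat.strong_induction_on generalizing x p y with
  | _ n ih =>
    obtain ⟨x', p', y', hw, hred⟩ := exists_reduce_eq_reduceAt (α := α) (β := β) (γ := γ)
      (not_isReduced_append_lhs_append x p y)
    rw [hred]
    exact reduceAt_eq_of_eq (fun x p y hlt => ih _ hlt x p y rfl) hw.symm (hw ▸ hn.le)

variable (α β γ) in
noncomputable def reduceOp (b : Bool) : Module.End ℂ (List Bool →₀ ℂ) :=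
  linearCombination ℂ fun w => reduce α β γ (b :: w)

theorem reduceOp_single (b : Bool) (w : List Bool) :
    reduceOp α β γ b (single w 1) = reduce α β γ (b :: w) := by
  simp [reduceOp]

theorem reduceOp_reduce (b : Bool) (w : List Bool) :
    reduceOp α β γ b (reduce α β γ w) = reduce α β γ (b :: w) := by
  induction hn : inversions w using Nat.strong_induction_on generalizing w with
  | _ n ih =>
    by_cases hw : IsReduced w
    · rw [reduce_of_isReduced hw, reduceOp_single]
    obtain ⟨x, p, y, rfl, hred⟩ := exists_reduce_eq_reduceAt (α := α) (β := β) (γ := γ) hw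
    rw [hred, reduceAt, map_sum, ← List.cons_append, ← List.cons_append,
      reduce_append_lhs_append, reduceAt]
    refine Finset.sum_congr rfl fun i _ => ?_
    rw [map_smul, ih _ (hn ▸ inversions_rhs_lt p i x y) _ rfl]
    rfl

theorem reduce_lhs_append (p : Bool) (w : List Bool) :
    reduce α β γ (lhs p ++ w) = ∑ i, coeff α β γ i • reduce α β γ (rhs p i ++ w) := by
  simpa [reduceAt] using reduce_append_lhs_append (α := α) (β := β) (γ := γ) [] p w

variable (α β γ) in
noncomputable def reduceRep : DownUp α β γ →ₐ[ℂ] Module.End ℂ (List Bool →₀ ℂ) :=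
  RingQuot.liftAlgHom ℂ ⟨FreeAlgebra.lift ℂ (reduceOp α β γ), fun a b h => by
    cases h <;> ext w : 2
    · simpa [reduceOp_single, reduceOp_reduce, Fin.sum_univ_three, coeff, lhs, rhs] using
        reduce_lhs_append true w
    · simpa [reduceOp_single, reduceOp_reduce, Fin.sum_univ_three, coeff, lhs, rhs] using
        reduce_lhs_append false w⟩

variable (α β γ) in
noncomputable def letter (b : Bool) : DownUp α β γ :=
  RingQuot.mkAlgHom ℂ (DownUpRel α β γ) (ι ℂ b)

variable (α β γ) in
noncomputable def word (w : List Bool) : DownUp α β γ :=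
  (w.map (letter α β γ)).prod

theorem word_append (v w : List Bool) : word α β γ (v ++ w) = word α β γ v * word α β γ w := by
  simp [word]

theorem word_pbwWord (q : ℕ × ℕ × ℕ) :
    word α β γ (pbwWord q) = u α β γ ^ q.1 * (d α β γ * u α β γ) ^ q.2.1 * d α β γ ^ q.2.2 := by
  simp [word, pbwWord, letter, u, d, List.prod_flatten, mul_assoc]

theorem word_lhs (p : Bool) : word α β γ (lhs p) = ∑ i, coeff α β γ i • word α β γ (rhs p i) := by
  cases p
  · simpa [word, letter, lhs, rhs, coeff, Fin.sum_univ_three, mul_assoc] using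
      RingQuot.mkAlgHom_rel ℂ (DownUpRel.rel2 (α := α) (β := β) (γ := γ))
  · simpa [word, letter, lhs, rhs, coeff, Fin.sum_univ_three, mul_assoc] using
      RingQuot.mkAlgHom_rel ℂ (DownUpRel.rel1 (α := α) (β := β) (γ := γ))

theorem word_append_lhs_append (x : List Bool) (p : Bool) (y : List Bool) :
    word α β γ (x ++ lhs p ++ y) = ∑ i, coeff α β γ i • word α β γ (x ++ rhs p i ++ y) := by
  simp only [word_append, word_lhs, Finset.mul_sum, Finset.sum_mul, mul_smul_comm, smul_mul_assoc]

theorem reduceRep_word_single_nil (w : List Bool) :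
    reduceRep α β γ (word α β γ w) (single [] 1) = reduce α β γ w := by
  induction w with
  | nil => simp [word, reduce_of_isReduced isReduced_nil]
  | cons b w ih =>
    rw [← List.singleton_append, word_append, map_mul, Module.End.mul_apply, ih]
    simpa [reduceRep, word, letter] using reduceOp_reduce b w

theorem linearIndependent_word_pbwWord : LinearIndependent ℂ fun q => word α β γ (pbwWord q) := by
  let f : DownUp α β γ →ₗ[ℂ] List Bool →₀ ℂ :=
    LinearMap.applyₗ (single [] 1) ∘ₗ (reduceRep α β γ).toLinearMap
  have hf : f ∘ (fun q => word α β γ (pbwWord q)) = fun q => single (pbwWord q) 1 := by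
    ext1 q
    simp [f, reduceRep_word_single_nil, reduce_of_isReduced (isReduced_pbwWord q)]
  refine LinearIndependent.of_comp f ?_
  rw [hf]
  exact (linearIndependent_single_one ℂ _).comp pbwWord pbwWord_injective

theorem word_mem_span_pbwWord (w : List Bool) :
    word α β γ w ∈ span ℂ (Set.range fun q => word α β γ (pbwWord q)) := by
  induction hn : inversions w using Nat.strong_induction_on generalizing w with
  | _ n ih =>
    by_cases hw : IsReduced w
    · obtain ⟨q, rfl⟩ := exists_pbwWord_of_isReduced hw
      exact subset_span ⟨q, rfl⟩
    obtain ⟨⟨x, p, y⟩, rfl⟩ := exists_eq_append_lhs_append_of_not_isReduced hw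
    rw [word_append_lhs_append]
    exact sum_mem fun i _ => smul_mem _ _ (ih _ (hn ▸ inversions_rhs_lt p i x y) _ rfl)

theorem span_range_word : span ℂ (Set.range (word α β γ)) = ⊤ := by
  have hmul : span ℂ (Set.range (word α β γ)) * span ℂ (Set.range (word α β γ)) ≤
      span ℂ (Set.range (word α β γ)) := by
    rw [span_mul_span]
    refine span_mono ?_
    rintro _ ⟨_, ⟨v, rfl⟩, _, ⟨w, rfl⟩, rfl⟩
    exact ⟨v ++ w, word_append v w⟩
  rw [eq_top_iff']
  intro a
  obtain ⟨a, rfl⟩ := RingQuot.mkAlgHom_surjective ℂ (DownUpRel α β γ) a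
  induction a using FreeAlgebra.induction with
  | grade0 r =>
    rw [AlgHom.commutes, Algebra.algebraMap_eq_smul_one]
    exact smul_mem _ _ (subset_span ⟨[], rfl⟩)
  | grade1 b => exact subset_span ⟨[b], by simp [word, letter]⟩
  | mul a b ha hb => rw [map_mul]; exact hmul (mul_mem_mul ha hb)
  | add a b ha hb => rw [map_add]; exact add_mem ha hb

theorem span_word_pbwWord_eq_top : span ℂ (Set.range fun q => word α β γ (pbwWord q)) = ⊤ :=
  eq_top_iff.2 <| span_range_word.ge.trans <|
    span_le.2 <| Set.range_subset_iff.2 word_mem_span_pbwWord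

end DownUp

/-- Theorem 3.1 (PBW theorem): the monomials uⁱ(du)ʲdᵏ form a ℂ-basis of A(α,β,γ). -/
theorem downUp_pbw (α β γ : ℂ) :
    LinearIndependent ℂ (fun x : ℕ × ℕ × ℕ =>
      DownUp.u α β γ ^ x.1 * (DownUp.d α β γ * DownUp.u α β γ) ^ x.2.1
        * DownUp.d α β γ ^ x.2.2) ∧
    Submodule.span ℂ (Set.range (fun x : ℕ × ℕ × ℕ =>
      DownUp.u α β γ ^ x.1 * (DownUp.d α β γ * DownUp.u α β γ) ^ x.2.1
        * DownUp.d α β γ ^ x.2.2)) = ⊤ := by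
  simp only [← DownUp.word_pbwWord]
  exact ⟨DownUp.linearIndependent_word_pbwWord, DownUp.span_word_pbwWord_eq_top⟩
end

section
/- The down-up algebra A(α,β,γ) is ℤ-graded with A = ⊕ₙ Aₙ where Aₙ = span{uⁱ(du)ʲdᵏ : i − k = n}, and the zero component A₀ = span{uⁱ(du)ʲdⁱ : i, j ≥ 0} is a commutative subalgebra. -/
open FreeAlgebra

/-!
Sending `u ↦ u ⊗ T` and `d ↦ d ⊗ T⁻¹` respects the relations, which are homogeneous, so it
defines an algebra map `A → A[T, T⁻¹]`; its eigenspaces `{x | x ↦ x ⊗ Tⁿ}` are independent and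
multiply like a grading, and the monomial `uⁱ(du)ʲdᵏ` lies in the eigenspace of degree `i - k`.
Rewriting `d · uⁱ(du)ʲdᵏ` and `du · uⁱ(du)ʲdᵏ` with the relations, by induction on the length
`i + 2j + k`, shows that the monomials span `A`; hence they span each eigenspace, which is
therefore `Aₙ`.

In degree `0` the monomials are `uⁱ(du)ʲdⁱ = φⁱ((du)ʲ)` with `φ x = u x d`. The relations give
that `du` and `ud` commute, that `φ` maps the common centralizer of `du` and `ud` into it, and
that `φ` maps commuting elements of the centralizer of `du` to commuting elements.
-/

open AddMonoidAlgebra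

section Coaction

variable {R A ι : Type*} [CommSemiring R] [Semiring A] [Algebra R A] [AddMonoid ι]

noncomputable def coactionGrade (ψ : A →ₐ[R] A[ι]) (i : ι) : Submodule R A :=
  LinearMap.eqLocus ψ.toLinearMap (lsingle i)

theorem mem_coactionGrade {ψ : A →ₐ[R] A[ι]} {i : ι} {x : A} :
    x ∈ coactionGrade ψ i ↔ ψ x = single i x :=
  LinearMap.mem_eqLocus

theorem iSupIndep_coactionGrade (ψ : A →ₐ[R] A[ι]) : iSupIndep (coactionGrade ψ) := by
  intro i
  rw [Submodule.disjoint_def]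
  intro x hxi hxo
  let coeffAt : A →ₗ[R] A := Finsupp.lapply i ∘ₗ (coeffLinearEquiv R).toLinearMap ∘ₗ ψ.toLinearMap
  have hker : (⨆ j, ⨆ _ : j ≠ i, coactionGrade ψ j) ≤ LinearMap.ker coeffAt :=
    iSup₂_le fun j hj y hy => by
      simp [coeffAt, mem_coactionGrade.mp hy, coeff_single, Finsupp.single_eq_of_ne' hj]
  simpa [coeffAt, mem_coactionGrade.mp hxi, coeff_single] using hker hxo

theorem coactionGrade_mul_le (ψ : A →ₐ[R] A[ι]) (i j : ι) :
    coactionGrade ψ i * coactionGrade ψ j ≤ coactionGrade ψ (i + j) :=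
  Submodule.mul_le.mpr fun x hx y hy => mem_coactionGrade.mpr <| by
    rw [map_mul, mem_coactionGrade.mp hx, mem_coactionGrade.mp hy, single_mul_single]

end Coaction

namespace DownUp

variable {α β γ : ℂ}

local notation "d" => DownUp.d α β γ
local notation "u" => DownUp.u α β γ

theorem d_mul_d_mul_u : d * d * u = α • (d * u * d) + β • (u * d * d) + γ • d := by
  simpa [DownUp.d, DownUp.u] using
    RingQuot.mkAlgHom_rel ℂ (DownUpRel.rel1 (α := α) (β := β) (γ := γ))

theorem d_mul_u_mul_u : d * u * u = α • (u * d * u) + β • (u * u * d) + γ • u := by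
  simpa [DownUp.d, DownUp.u] using
    RingQuot.mkAlgHom_rel ℂ (DownUpRel.rel2 (α := α) (β := β) (γ := γ))

theorem d_mul_d_mul_u_mul (y : DownUp α β γ) :
    d * (d * u * y) = α • (d * u * (d * y)) + β • (u * (d * (d * y))) + γ • (d * y) := by
  simpa [add_mul, smul_mul_assoc, mul_assoc] using congrArg (· * y) d_mul_d_mul_u

theorem d_mul_u_mul_u_mul (y : DownUp α β γ) :
    d * u * (u * y) = α • (u * (d * u * y)) + β • (u * (u * (d * y))) + γ • (u * y) := by
  simpa [add_mul, smul_mul_assoc, mul_assoc] using congrArg (· * y) d_mul_u_mul_u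

noncomputable def gradingHom (α β γ : ℂ) : DownUp α β γ →ₐ[ℂ] (DownUp α β γ)[ℤ] :=
  RingQuot.liftAlgHom ℂ ⟨FreeAlgebra.lift ℂ fun b =>
      cond b (single (-1) (DownUp.d α β γ)) (single 1 (DownUp.u α β γ)), by
    rintro _ _ ⟨⟩ <;>
      simp only [map_mul, map_add, map_smul, FreeAlgebra.lift_ι_apply, cond_true, cond_false,
        single_mul_single, smul_single, ← single_add, Int.reduceAdd, Int.reduceNeg,
        d_mul_d_mul_u, d_mul_u_mul_u]⟩

theorem gradingHom_d : gradingHom α β γ d = single (-1) d := by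
  simp [gradingHom, DownUp.d]

theorem gradingHom_u : gradingHom α β γ u = single 1 u := by
  simp [gradingHom, DownUp.u]

variable (α β γ) in
noncomputable def monomial (i j k : ℕ) : DownUp α β γ := u ^ i * (d * u) ^ j * d ^ k

theorem monomial_succ_left (i j k : ℕ) :
    monomial α β γ (i + 1) j k = u * monomial α β γ i j k := by
  simp only [monomial, pow_succ', mul_assoc]

theorem monomial_zero_succ (j k : ℕ) :
    monomial α β γ 0 (j + 1) k = d * u * monomial α β γ 0 j k := by
  simp only [monomial, pow_zero, one_mul, pow_succ', mul_assoc]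

theorem monomial_zero_zero_succ (k : ℕ) :
    monomial α β γ 0 0 (k + 1) = d * monomial α β γ 0 0 k := by
  simp [monomial, pow_succ']

theorem gradingHom_monomial (i j k : ℕ) :
    gradingHom α β γ (monomial α β γ i j k) = single ((i : ℤ) - k) (monomial α β γ i j k) := by
  simp only [monomial, map_mul, map_pow, gradingHom_d, gradingHom_u, single_mul_single, single_pow]
  congr 1
  simp only [nsmul_eq_mul]
  ring

variable (α β γ) in
noncomputable def gradedPart (n : ℤ) : Submodule ℂ (DownUp α β γ) :=
  Submodule.span ℂ {a | ∃ i j k : ℕ, (i : ℤ) - k = n ∧ a = monomial α β γ i j k}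

theorem gradedPart_le_coactionGrade (n : ℤ) :
    gradedPart α β γ n ≤ coactionGrade (gradingHom α β γ) n :=
  Submodule.span_le.mpr <| by
    rintro _ ⟨i, j, k, rfl, rfl⟩
    exact mem_coactionGrade.mpr (gradingHom_monomial i j k)

variable (α β γ) in
noncomputable def monomialSpanLE (L : ℕ) : Submodule ℂ (DownUp α β γ) :=
  Submodule.span ℂ {a | ∃ i j k : ℕ, i + 2 * j + k ≤ L ∧ a = monomial α β γ i j k}

theorem monomial_mem_monomialSpanLE {i j k L : ℕ} (h : i + 2 * j + k ≤ L) :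
    monomial α β γ i j k ∈ monomialSpanLE α β γ L :=
  Submodule.subset_span ⟨i, j, k, h, rfl⟩

theorem monomialSpanLE_mono : Monotone (monomialSpanLE α β γ) :=
  fun _ _ hL => Submodule.span_mono fun _ ⟨i, j, k, h, ha⟩ => ⟨i, j, k, h.trans hL, ha⟩

theorem monomialSpanLE_le {L : ℕ} {p : Submodule ℂ (DownUp α β γ)}
    (h : ∀ i j k : ℕ, i + 2 * j + k ≤ L → monomial α β γ i j k ∈ p) :
    monomialSpanLE α β γ L ≤ p :=
  Submodule.span_le.mpr <| by
    rintro _ ⟨i, j, k, hL, rfl⟩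
    exact h i j k hL

theorem u_mul_mem_monomialSpanLE {L : ℕ} {x : DownUp α β γ} (hx : x ∈ monomialSpanLE α β γ L) :
    u * x ∈ monomialSpanLE α β γ (L + 1) := by
  refine monomialSpanLE_le (p := (monomialSpanLE α β γ (L + 1)).comap (LinearMap.mulLeft ℂ u))
    (fun i j k hL => ?_) hx
  rw [Submodule.mem_comap, LinearMap.mulLeft_apply, ← monomial_succ_left]
  exact monomial_mem_monomialSpanLE (by omega)

theorem d_mul_monomial_mem_and_d_mul_u_mul_monomial_mem {L i j k : ℕ}
    (ih : ∀ L' < L, ∀ y ∈ monomialSpanLE α β γ L',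
      d * y ∈ monomialSpanLE α β γ (L' + 1) ∧ d * u * y ∈ monomialSpanLE α β γ (L' + 2))
    (hL : i + 2 * j + k ≤ L) :
    d * monomial α β γ i j k ∈ monomialSpanLE α β γ (L + 1) ∧
      d * u * monomial α β γ i j k ∈ monomialSpanLE α β γ (L + 2) := by
  have hd {L'} (hL' : L' < L) {y} (hy) := (ih L' hL' y hy).1
  have hdu {L'} (hL' : L' < L) {y} (hy) := (ih L' hL' y hy).2
  have hu {L' y} := @u_mul_mem_monomialSpanLE α β γ L' y
  rcases i with _ | i
  · rcases j with _ | j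
    · exact ⟨monomial_zero_zero_succ k ▸ monomial_mem_monomialSpanLE (by omega),
        monomial_zero_succ 0 k ▸ monomial_mem_monomialSpanLE (by omega)⟩
    refine ⟨?_, monomial_zero_succ (j + 1) k ▸ monomial_mem_monomialSpanLE (by omega)⟩
    have hm : d * monomial α β γ 0 j k ∈ monomialSpanLE α β γ (L - 1) :=
      monomialSpanLE_mono (by omega) (hd (L' := L - 2) (by omega)
        (monomial_mem_monomialSpanLE (by omega)))
    rw [monomial_zero_succ, d_mul_d_mul_u_mul]
    refine add_mem (add_mem (Submodule.smul_mem _ _ ?_) (Submodule.smul_mem _ _ ?_))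
      (Submodule.smul_mem _ _ ?_)
    · exact monomialSpanLE_mono (by omega) (hdu (by omega) hm)
    · exact monomialSpanLE_mono (by omega) (hu (hd (by omega) hm))
    · exact monomialSpanLE_mono (by omega) hm
  have hm : monomial α β γ i j k ∈ monomialSpanLE α β γ (L - 1) :=
    monomial_mem_monomialSpanLE (by omega)
  rw [monomial_succ_left, ← mul_assoc d, d_mul_u_mul_u_mul]
  refine ⟨monomialSpanLE_mono (by omega) (hdu (by omega) hm), ?_⟩
  refine add_mem (add_mem (Submodule.smul_mem _ _ ?_) (Submodule.smul_mem _ _ ?_))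
    (Submodule.smul_mem _ _ ?_)
  · exact monomialSpanLE_mono (by omega) (hu (hdu (by omega) hm))
  · exact monomialSpanLE_mono (by omega) (hu (hu (hd (by omega) hm)))
  · exact monomialSpanLE_mono (by omega) (hu hm)

theorem d_mul_mem_and_d_mul_u_mul_mem_monomialSpanLE (L : ℕ) :
    ∀ x ∈ monomialSpanLE α β γ L,
      d * x ∈ monomialSpanLE α β γ (L + 1) ∧ d * u * x ∈ monomialSpanLE α β γ (L + 2) := by
  induction L using Nat.strong_induction_on with
  | _ L ih =>
  intro x hx
  refine Submodule.mem_inf.mp <| monomialSpanLE_le (p := (monomialSpanLE α β γ (L + 1)).comap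
      (LinearMap.mulLeft ℂ d) ⊓ (monomialSpanLE α β γ (L + 2)).comap (LinearMap.mulLeft ℂ (d * u)))
    (fun i j k hL => ?_) hx
  exact Submodule.mem_inf.mpr (d_mul_monomial_mem_and_d_mul_u_mul_monomial_mem ih hL)

theorem mem_iSup_monomialSpanLE_iff {x : DownUp α β γ} :
    x ∈ ⨆ L, monomialSpanLE α β γ L ↔ ∃ L, x ∈ monomialSpanLE α β γ L :=
  Submodule.mem_iSup_of_directed _ monomialSpanLE_mono.directed_le

theorem mul_mem_iSup_monomialSpanLE (a : DownUp α β γ) {y : DownUp α β γ}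
    (hy : y ∈ ⨆ L, monomialSpanLE α β γ L) : a * y ∈ ⨆ L, monomialSpanLE α β γ L := by
  obtain ⟨x, rfl⟩ := RingQuot.mkAlgHom_surjective ℂ (DownUpRel α β γ) a
  induction x using FreeAlgebra.induction generalizing y with
  | grade0 r =>
    rw [AlgHom.commutes, Algebra.algebraMap_eq_smul_one, smul_one_mul]
    exact Submodule.smul_mem _ r hy
  | grade1 b =>
    obtain ⟨L, hL⟩ := mem_iSup_monomialSpanLE_iff.mp hy
    refine mem_iSup_monomialSpanLE_iff.mpr ⟨L + 1, ?_⟩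
    cases b
    · exact u_mul_mem_monomialSpanLE hL
    · exact (d_mul_mem_and_d_mul_u_mul_mem_monomialSpanLE L _ hL).1
  | mul x x' hx hx' =>
    rw [map_mul, mul_assoc]
    exact hx (hx' hy)
  | add x x' hx hx' =>
    rw [map_add, add_mul]
    exact add_mem (hx hy) (hx' hy)

theorem iSup_monomialSpanLE_eq_top : ⨆ L, monomialSpanLE α β γ L = ⊤ := by
  refine eq_top_iff.mpr fun a _ => mul_one a ▸ mul_mem_iSup_monomialSpanLE a ?_
  have h1 : monomial α β γ 0 0 0 ∈ monomialSpanLE α β γ 0 := monomial_mem_monomialSpanLE le_rfl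
  exact Submodule.mem_iSup_of_mem 0 (by simpa [monomial] using h1)

theorem iSup_gradedPart_eq_top : ⨆ n, gradedPart α β γ n = ⊤ :=
  eq_top_iff.mpr <| iSup_monomialSpanLE_eq_top.symm.le.trans <| iSup_le fun _ =>
    monomialSpanLE_le fun i j k _ =>
      Submodule.mem_iSup_of_mem ((i : ℤ) - k) (Submodule.subset_span ⟨i, j, k, rfl, rfl⟩)

theorem commute_u_mul_d_d_mul_u : Commute (u * d) (d * u) := by
  calc u * d * (d * u) = u * (d * d * u) := by simp only [mul_assoc]
    _ = d * u * u * d := by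
      rw [d_mul_d_mul_u, d_mul_u_mul_u]
      simp only [mul_add, add_mul, mul_smul_comm, smul_mul_assoc, mul_assoc]
    _ = d * u * (u * d) := by simp only [mul_assoc]

theorem commute_u_mul_d_sandwich {x : DownUp α β γ} (hx : Commute (d * u) x) :
    Commute (u * d) (u * x * d) :=
  calc u * d * (u * x * d) = u * (d * u * x) * d := by simp only [mul_assoc]
    _ = u * (x * (d * u)) * d := by rw [hx.eq]
    _ = u * x * d * (u * d) := by simp only [mul_assoc]

theorem commute_d_mul_u_sandwich {x : DownUp α β γ} (hdu : Commute (d * u) x)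
    (hud : Commute (u * d) x) : Commute (d * u) (u * x * d) :=
  calc d * u * (u * x * d) = d * u * u * (x * d) := by simp only [mul_assoc]
    _ = α • (u * (d * u * x) * d) + β • (u * (u * d * x) * d) + γ • (u * x * d) := by
      rw [d_mul_u_mul_u]
      simp only [add_mul, smul_mul_assoc, mul_assoc]
    _ = α • (u * (x * (d * u)) * d) + β • (u * (x * (u * d)) * d) + γ • (u * x * d) := by
      rw [hdu.eq, hud.eq]
    _ = u * x * (d * d * u) := by
      rw [d_mul_d_mul_u]
      simp only [mul_add, mul_smul_comm, mul_assoc]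
    _ = u * x * d * (d * u) := by simp only [mul_assoc]

theorem commute_sandwich {x y : DownUp α β γ} (hx : Commute (d * u) x) (hy : Commute (d * u) y)
    (hxy : Commute x y) : Commute (u * x * d) (u * y * d) :=
  calc u * x * d * (u * y * d) = u * (x * (d * u * y)) * d := by simp only [mul_assoc]
    _ = u * (x * y * (d * u)) * d := by rw [hy.eq, mul_assoc x]
    _ = u * (y * x * (d * u)) * d := by rw [hxy.eq]
    _ = u * (y * (d * u * x)) * d := by rw [mul_assoc y, hx.eq]
    _ = u * y * d * (u * x * d) := by simp only [mul_assoc]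

theorem monomial_eq_iterate (i j : ℕ) :
    monomial α β γ i j i = (fun x => u * x * d)^[i] ((d * u) ^ j) := by
  induction i with
  | zero => simp [monomial]
  | succ i ih =>
    rw [Function.iterate_succ_apply', ← ih, monomial, monomial, pow_succ', pow_succ]
    simp only [mul_assoc]

theorem commute_d_mul_u_and_u_mul_d_monomial (i j : ℕ) :
    Commute (d * u) (monomial α β γ i j i) ∧ Commute (u * d) (monomial α β γ i j i) := by
  induction i with
  | zero =>
    rw [monomial_eq_iterate]
    exact ⟨(Commute.refl _).pow_right j, commute_u_mul_d_d_mul_u.pow_right j⟩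
  | succ i ih =>
    rw [monomial_eq_iterate, Function.iterate_succ_apply', ← monomial_eq_iterate]
    exact ⟨commute_d_mul_u_sandwich ih.1 ih.2, commute_u_mul_d_sandwich ih.1⟩

theorem commute_monomial (i i' j j' : ℕ) :
    Commute (monomial α β γ i j i) (monomial α β γ i' j' i') := by
  induction i generalizing i' with
  | zero =>
    rw [monomial_eq_iterate, Function.iterate_zero_apply]
    exact (commute_d_mul_u_and_u_mul_d_monomial i' j').1.pow_left j
  | succ i ih =>
    rcases i' with _ | i'
    · rw [monomial_eq_iterate 0, Function.iterate_zero_apply]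
      exact ((commute_d_mul_u_and_u_mul_d_monomial (i + 1) j).1.pow_left j').symm
    · simp only [monomial_eq_iterate, Function.iterate_succ_apply']
      simp only [← monomial_eq_iterate]
      exact commute_sandwich (commute_d_mul_u_and_u_mul_d_monomial i j).1
        (commute_d_mul_u_and_u_mul_d_monomial i' j').1 (ih i')

theorem commute_of_mem_gradedPart_zero {x y : DownUp α β γ} (hx : x ∈ gradedPart α β γ 0)
    (hy : y ∈ gradedPart α β γ 0) : Commute x y := by
  refine Commute.span_left (fun a ha => Commute.span_right (fun b hb => ?_) y hy) x hx
  obtain ⟨i, j, k, hik, rfl⟩ := ha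
  obtain ⟨i', j', k', hik', rfl⟩ := hb
  obtain rfl : i = k := by omega
  obtain rfl : i' = k' := by omega
  exact commute_monomial i i' j j'

end DownUp

/-- Proposition 3.5: A(α,β,γ) is ℤ-graded with Aₙ = span{uⁱ(du)ʲdᵏ : i − k = n},
and A₀ is a commutative subalgebra. -/
theorem downUp_graded (α β γ : ℂ) (Agr : ℤ → Submodule ℂ (DownUp α β γ))
    (hAgr : ∀ n : ℤ, Agr n = Submodule.span ℂ
      {a : DownUp α β γ | ∃ i j k : ℕ, (i : ℤ) - (k : ℤ) = n ∧
        a = DownUp.u α β γ ^ i * (DownUp.d α β γ * DownUp.u α β γ) ^ j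
          * DownUp.d α β γ ^ k}) :
    DirectSum.IsInternal Agr ∧
    (∀ m n : ℤ, Agr m * Agr n ≤ Agr (m + n)) ∧
    (∀ x ∈ Agr 0, ∀ y ∈ Agr 0, x * y = y * x) := by
  obtain rfl : Agr = DownUp.gradedPart α β γ := funext hAgr
  have hgrade : DownUp.gradedPart α β γ = coactionGrade (DownUp.gradingHom α β γ) :=
    ((iSupIndep_coactionGrade _).le_iff_eq_of_iSup_eq_top DownUp.iSup_gradedPart_eq_top).mp
      DownUp.gradedPart_le_coactionGrade
  refine ⟨?_, ?_, fun x hx y hy => (DownUp.commute_of_mem_gradedPart_zero hx hy).eq⟩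
  · rw [DirectSum.isInternal_submodule_iff_iSupIndep_and_iSup_eq_top]
    exact ⟨hgrade ▸ iSupIndep_coactionGrade _, DownUp.iSup_gradedPart_eq_top⟩
  · rw [hgrade]
    exact coactionGrade_mul_le _
end

section
/- Let F ⊆ ℂ² be a set of weights closed under δ and μ (where β ≠ 0), and let ρ ∈ ℂ be nonzero. Let N(F,ρ) be the ℂ-vector space with basis {v_ω : ω ∈ F}, and define d·v_ω = ρ·v_{δ(ω)} and u·v_ω = ρ⁻¹·μ(ω)″·v_{μ(ω)}. Then these operators satisfy the down-up relations d²u = α·dud + β·ud² + γ·d and du² = α·udu + β·u²d + γ·u on N(F,ρ), so N(F,ρ) is an A(α,β,γ)-module; moreover (du)·v_ω = ω′v_ω and (ud)·v_ω = ω″v_ω. -/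
/-- Theorem 5.5(a): if F ⊆ ℂ² is closed under the weight maps δ and μ (β ≠ 0) and
ρ ≠ 0, then the operators d·v_ω = ρ v_{δ(ω)}, u·v_ω = ρ⁻¹ μ(ω)″ v_{μ(ω)} on the
space N(F,ρ) with basis {v_ω : ω ∈ F} satisfy the down-up relations, making
N(F,ρ) an A(α,β,γ)-module; moreover du·v_ω = ω′v_ω and ud·v_ω = ω″v_ω. -/
theorem downUp_NFrho_module (α β γ ρ : ℂ) (hβ : β ≠ 0) (hρ : ρ ≠ 0)
    (δ μ : ℂ × ℂ → ℂ × ℂ)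
    (hδ : ∀ ν : ℂ × ℂ, δ ν = (ν.2, β⁻¹ * (ν.1 - α * ν.2 - γ)))
    (hμ : ∀ ν : ℂ × ℂ, μ ν = (α * ν.1 + β * ν.2 + γ, ν.1))
    (F : Set (ℂ × ℂ))
    (hδF : ∀ ω ∈ F, δ ω ∈ F) (hμF : ∀ ω ∈ F, μ ω ∈ F)
    (D U : (F →₀ ℂ) →ₗ[ℂ] (F →₀ ℂ))
    (hD : ∀ ω : F, D (Finsupp.single ω 1)
      = ρ • Finsupp.single (⟨δ (ω : ℂ × ℂ), hδF ω ω.2⟩ : F) 1)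
    (hU : ∀ ω : F, U (Finsupp.single ω 1)
      = (ρ⁻¹ * (μ (ω : ℂ × ℂ)).2) • Finsupp.single (⟨μ (ω : ℂ × ℂ), hμF ω ω.2⟩ : F) 1) :
    (D ∘ₗ D ∘ₗ U = α • (D ∘ₗ U ∘ₗ D) + β • (U ∘ₗ D ∘ₗ D) + γ • D) ∧
    (D ∘ₗ U ∘ₗ U = α • (U ∘ₗ D ∘ₗ U) + β • (U ∘ₗ U ∘ₗ D) + γ • U) ∧
    (∀ ω : F, D (U (Finsupp.single ω 1)) = (ω : ℂ × ℂ).1 • Finsupp.single ω 1) ∧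
    (∀ ω : F, U (D (Finsupp.single ω 1)) = (ω : ℂ × ℂ).2 • Finsupp.single ω 1) := by
  have hμ2 : ∀ ν : ℂ × ℂ, (μ ν).2 = ν.1 := fun ν => by rw [hμ]
  have hδ1 : ∀ ν : ℂ × ℂ, (δ ν).1 = ν.2 := fun ν => by rw [hδ]
  have hδ2 : ∀ ν : ℂ × ℂ, (δ ν).2 = β⁻¹ * (ν.1 - α * ν.2 - γ) := fun ν => by rw [hδ]
  have hμ1 : ∀ ν : ℂ × ℂ, (μ ν).1 = α * ν.1 + β * ν.2 + γ := fun ν => by rw [hμ]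
  have hδμ : ∀ ν : ℂ × ℂ, δ (μ ν) = ν := by
    intro ν
    rw [hμ, hδ]
    refine Prod.ext rfl ?_
    show β⁻¹ * (α * ν.1 + β * ν.2 + γ - α * ν.1 - γ) = ν.2
    field_simp
    ring
  have hμδ : ∀ ν : ℂ × ℂ, μ (δ ν) = ν := by
    intro ν
    rw [hδ, hμ]
    refine Prod.ext ?_ rfl
    show α * ν.2 + β * (β⁻¹ * (ν.1 - α * ν.2 - γ)) + γ = ν.1
    field_simp
    ring
  have hDU : ∀ ω : F, D (U (Finsupp.single ω 1)) = (ω : ℂ × ℂ).1 • Finsupp.single ω 1 := by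
    intro ω
    rw [hU, map_smul, hD]
    have h1 : (⟨δ (μ (ω : ℂ × ℂ)), hδF _ (hμF ω ω.2)⟩ : F) = ω := Subtype.ext (hδμ _)
    rw [h1, smul_smul, hμ2]
    congr 1
    field_simp
    try ring
  have hUD : ∀ ω : F, U (D (Finsupp.single ω 1)) = (ω : ℂ × ℂ).2 • Finsupp.single ω 1 := by
    intro ω
    rw [hD, map_smul, hU]
    have h1 : (⟨μ (δ (ω : ℂ × ℂ)), hμF _ (hδF ω ω.2)⟩ : F) = ω := Subtype.ext (hμδ _)
    have h2 : ((⟨δ (ω : ℂ × ℂ), hδF ω ω.2⟩ : F) : ℂ × ℂ) = δ (ω : ℂ × ℂ) := rfl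
    rw [h1, smul_smul, h2, hμ2, hδ1]
    congr 1
    field_simp
    try ring
  refine ⟨?_, ?_, hDU, hUD⟩
  · apply Finsupp.lhom_ext'
    intro ω
    apply LinearMap.ext
    intro c
    have hc : (Finsupp.lsingle ω : ℂ →ₗ[ℂ] (F →₀ ℂ)) c = c • Finsupp.single ω 1 := by
      simp [Finsupp.smul_single]
    simp only [LinearMap.comp_apply, hc, map_smul, LinearMap.add_apply, LinearMap.smul_apply]
    congr 1
    simp only [hD, hU, map_smul, smul_smul, hδμ, hμδ, hμ2, hδ1, hδ2, Subtype.coe_eta]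
    simp only [← add_smul]
    congr 1
    field_simp
    try ring
  · apply Finsupp.lhom_ext'
    intro ω
    apply LinearMap.ext
    intro c
    have hc : (Finsupp.lsingle ω : ℂ →ₗ[ℂ] (F →₀ ℂ)) c = c • Finsupp.single ω 1 := by
      simp [Finsupp.smul_single]
    simp only [LinearMap.comp_apply, hc, map_smul, LinearMap.add_apply, LinearMap.smul_apply]
    congr 1
    simp only [hD, hU, map_smul, smul_smul, hδμ, hμδ, hμ2, hμ1, hδ1, hδ2, Subtype.coe_eta]
    simp only [← add_smul]
    congr 1
    field_simp
    try ring
end
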